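/- For all nonnegative integers m and n and all real x, the probabilistic r-Bell polynomials satisfy the recurrence φ_{m+n,r}^Y(x) = Σ_{i=0}^{n} Σ_{k=0}^{m} C(n,i) · φ_{i,r}^Y(x) · x^k · (1/k!) · Σ_{j=k}^{m} C(m,j) · Σ_{l_1+⋯+l_k=j, l_i≥1} (j!/(l_1!⋯l_k!)) · r^{m−j} · E[S_k^{n−i} · ∏_{i'=1}^{k} Y_{i'}^{l_{i'}}], where the innermost sum is over all k-tuples (l_1,…,l_k) of positive integers with l_1+⋯+l_k = j. -/

import Mathlib

open MeasureTheory ProbabilityTheory Finset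

noncomputable section

variable {Ω : Type*} [MeasureSpace Ω]

/-- Partial sums `S_k = Y_1 + ⋯ + Y_k` (with `S_0 = 0`). -/
def S (Y : ℕ → Ω → ℝ) (k : ℕ) (ω : Ω) : ℝ := ∑ i ∈ Finset.range k, Y i ω

/-- The probabilistic r-Stirling numbers of the second kind associated with `Y`:
`{n+r brace k+r}_{r,Y} = (1/k!) ∑_{j=0}^{k} C(k,j) (−1)^{k−j} E[(S_j + r)^n]`. -/
def probRStirling (Y : ℕ → Ω → ℝ) (r n k : ℕ) : ℝ :=
  ((k.factorial : ℝ))⁻¹ *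
    ∑ j ∈ Finset.range (k + 1), (k.choose j : ℝ) * (-1) ^ (k - j) *
      ∫ ω, (S Y j ω + (r : ℝ)) ^ n

/-- The probabilistic r-Bell polynomials associated with `Y`:
`φ_{n,r}^Y(x) = ∑_{k=0}^{n} {n+r brace k+r}_{r,Y} x^k`. -/
def phiRBell (Y : ℕ → Ω → ℝ) (r n : ℕ) (x : ℝ) : ℝ :=
  ∑ k ∈ Finset.range (n + 1), probRStirling Y r n k * x ^ k

/-- k-tuples of positive integers summing to `j`. -/
def posTuples (k j : ℕ) : Finset (Fin k → ℕ) :=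
  (Finset.Nat.antidiagonalTuple k j).filter fun l => ∀ i, 0 < l i

/-!
Let `M(t) = ∑ E[Y^q] t^q / q!` be the moment series of `Y`. By independence
`E[(S_j + r)^N] = N! [t^N] e^{rt} M(t)^j`, so `k! {N+r brace k+r}_{r,Y}` is
`N! [t^N] e^{rt} (M(t) - 1)^k`. Since `(m+n)! [t^{m+n}] f(t) = m! n! [s^m t^n] f(s+t)`, the
recurrence is read off from the binomial expansion of
`e^{r(s+t)} (M(s+t) - 1)^K = e^{rs} e^{rt} ((M(t) - 1) + (M(s+t) - M(t)))^K`: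
the powers of `M(t) - 1` give the `φ_{i,r}^Y`, and the `s^j`-coefficient of `(M(s+t) - M(t))^k`
is a sum over positive tuples `l` of `∏ M^{(l_i)}(t) / l_i!`, whose `t`-coefficients are the
mixed moments `E[S_k^q ∏ Y_i^{l_i}]`.
-/

open PowerSeries
open scoped Nat

theorem Nat.cast_multinomial {α K : Type*} [Field K] [CharZero K] (s : Finset α) (f : α → ℕ) :
    (Nat.multinomial s f : K) = (∑ i ∈ s, f i)! / ∏ i ∈ s, ((f i)! : K) := by
  rw [eq_div_iff (prod_ne_zero_iff.2 fun i _ ↦ Nat.cast_ne_zero.2 (Nat.factorial_ne_zero _)),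
    mul_comm]
  exact_mod_cast Nat.multinomial_spec s f

theorem Finset.sum_range_pow_mul_prod_pow {R : Type*} [CommSemiring R] (y : ℕ → R) (k q : ℕ)
    (c : Fin k → ℕ) :
    (∑ i ∈ range k, y i) ^ q * ∏ i : Fin k, y i ^ c i =
      ∑ t ∈ piAntidiag univ q, Nat.multinomial univ t * ∏ i : Fin k, y i ^ (t i + c i) := by
  rw [← Fin.sum_univ_eq_sum_range, sum_pow_eq_sum_piAntidiag, sum_mul]
  refine sum_congr rfl fun t _ ↦ ?_
  simp only [pow_add, prod_mul_distrib, mul_assoc]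

theorem posTuples_eq_empty {k j : ℕ} (h : j < k) : posTuples k j = ∅ := by
  refine eq_empty_of_forall_notMem fun l hl ↦ h.not_ge ?_
  rw [posTuples, mem_filter, Nat.mem_antidiagonalTuple] at hl
  simpa [← hl.1] using card_nsmul_le_sum univ l 1 fun i _ ↦ hl.2 i

theorem Polynomial.coeff_sum_range_C_mul_X_pow {R : Type*} [Semiring R] {c : ℕ → R} {N : ℕ}
    (hc : ∀ K, N < K → c K = 0) (K : ℕ) :
    (∑ j ∈ range (N + 1), C (c j) * X ^ j).coeff K = c K := by
  simp only [finsetSum_coeff, coeff_C_mul_X_pow, sum_ite_eq, mem_range]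
  split_ifs with h
  · rfl
  · exact (hc K (by omega)).symm

theorem sum_range_mul_pow_eq_of_binomial_convolution {R : Type*} [CommRing R] {s w : ℕ → ℕ → R}
    {m n : ℕ} (hs : ∀ N K, N < K → s N K = 0) (hw : ∀ k q, m < k → w k q = 0)
    (h : ∀ K, s (m + n) K =
      ∑ i ∈ range (n + 1), n.choose i * ∑ p ∈ antidiagonal K, s i p.1 * w p.2 (n - i)) (x : R) :
    ∑ K ∈ range (m + n + 1), s (m + n) K * x ^ K =
      ∑ i ∈ range (n + 1), ∑ k ∈ range (m + 1),
        n.choose i * (∑ a ∈ range (i + 1), s i a * x ^ a) * x ^ k * w k (n - i) := by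
  let poly (c : ℕ → R) (N : ℕ) : Polynomial R :=
    ∑ j ∈ range (N + 1), Polynomial.C (c j) * Polynomial.X ^ j
  have heval (c : ℕ → R) (N : ℕ) : (poly c N).eval x = ∑ j ∈ range (N + 1), c j * x ^ j := by
    simp [poly, Polynomial.eval_finsetSum]
  have hpoly : poly (s (m + n)) (m + n) =
      ∑ i ∈ range (n + 1), (n.choose i : R) • (poly (s i) i * poly (w · (n - i)) m) := by
    ext K
    simp only [poly]
    rw [Polynomial.coeff_sum_range_C_mul_X_pow (hs _), h, Polynomial.finsetSum_coeff]
    refine sum_congr rfl fun i _ ↦ ?_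
    rw [Polynomial.coeff_smul, Polynomial.coeff_mul, smul_eq_mul]
    congr 1
    refine sum_congr rfl fun p _ ↦ ?_
    rw [Polynomial.coeff_sum_range_C_mul_X_pow (hs i),
      Polynomial.coeff_sum_range_C_mul_X_pow fun k ↦ hw k (n - i)]
  have := congrArg (Polynomial.eval x) hpoly
  simp only [heval, Polynomial.eval_finsetSum, Polynomial.eval_smul, Polynomial.eval_mul,
    smul_eq_mul] at this
  rw [this]
  refine sum_congr rfl fun i _ ↦ ?_
  rw [mul_sum, mul_sum]
  refine sum_congr rfl fun k _ ↦ ?_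
  ring

namespace PowerSeries

theorem coeff_prod_eq_sum_piAntidiag {R ι : Type*} [CommSemiring R] [DecidableEq ι]
    (s : Finset ι) (f : ι → R⟦X⟧) (d : ℕ) :
    coeff d (∏ j ∈ s, f j) = ∑ l ∈ piAntidiag s d, ∏ i ∈ s, coeff (l i) (f i) := by
  rw [coeff_prod, finsuppAntidiag, sum_map, ← sum_attach (piAntidiag s d)]
  rfl

theorem coeff_mul_pow_eq_zero_of_lt {R : Type*} [CommSemiring R] {f : R⟦X⟧}
    (hf : constantCoeff f = 0) (g : R⟦X⟧) {N K : ℕ} (h : N < K) : coeff N (g * f ^ K) = 0 :=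
  X_pow_dvd_iff.1 ((pow_dvd_pow_of_dvd (X_dvd_iff.2 hf) K).mul_left g) N h

section Bivariate

variable {R : Type*} [CommRing R]

/-- `shiftAdd f` is `f (s + t)`, as a series in `s` whose coefficients are series in `t`. -/
noncomputable def shiftAdd : R⟦X⟧ →+* R⟦X⟧⟦X⟧ :=
  (map (MvPowerSeries.renameEquiv R (Equiv.equivPUnit (Fin 1))).toRingHom).comp
    ((MvPowerSeries.finSuccEquiv R 1).toRingHom.comp
      (substAlgHom (R := R) (a := MvPowerSeries.X (0 : Fin 2) + MvPowerSeries.X 1)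
        (HasSubst.of_constantCoeff_zero (by simp))).toRingHom)

theorem coeff_coeff_shiftAdd (f : R⟦X⟧) (a b : ℕ) :
    coeff b (coeff a (shiftAdd f)) = (a + b).choose a * coeff (a + b) f := by
  set F : MvPowerSeries (Fin 2) R := subst (MvPowerSeries.X 0 + MvPowerSeries.X 1) f
  have hrename := MvPowerSeries.coeff_embDomain_rename (Equiv.equivPUnit (Fin 1)).toEmbedding
    (coeff a (MvPowerSeries.finSuccEquiv R 1 F)) (Finsupp.single 0 b)
  have hcurry := MvPowerSeries.coeff_coeff_finSuccEquiv F (k := a) (x := Finsupp.single 0 b)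
  have hsubst := coeff_subst_X_zero_add_X_one f (Finsupp.cons a (Finsupp.single 0 b))
  rw [show (1 : Fin 2) = Fin.succ 0 from rfl, Finsupp.cons_succ, Finsupp.cons_zero,
    Finsupp.single_eq_same] at hsubst
  rw [Finsupp.embDomain_single,
    show (Equiv.equivPUnit (Fin 1)).toEmbedding 0 = () from rfl] at hrename
  refine Eq.trans ?_ (hrename.trans (hcurry.trans hsubst))
  simp only [shiftAdd, RingHom.comp_apply, coeff_map, AlgHom.toRingHom_eq_coe, RingHom.coe_coe,
    coe_substAlgHom, F]
  rfl

theorem coeff_zero_shiftAdd (f : R⟦X⟧) : coeff 0 (shiftAdd f) = f := by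
  ext b
  rw [coeff_coeff_shiftAdd]
  simp

/-- `increment f` is `f (s + t) - f t`, in the encoding of `shiftAdd`. -/
noncomputable def increment (f : R⟦X⟧) : R⟦X⟧⟦X⟧ := shiftAdd f - C f

theorem constantCoeff_increment (f : R⟦X⟧) : constantCoeff (increment f) = 0 := by
  rw [increment, ← coeff_zero_eq_constantCoeff_apply, map_sub, coeff_zero_shiftAdd, coeff_zero_C,
    sub_self]

theorem coeff_coeff_C_mul (g : R⟦X⟧) (H : R⟦X⟧⟦X⟧) (m n : ℕ) :
    coeff n (coeff m (C g * H)) = ∑ p ∈ antidiagonal n, coeff p.1 g * coeff p.2 (coeff m H) := by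
  rw [coeff_C_mul, coeff_mul]

end Bivariate

theorem coeff_shiftAdd (f : ℝ⟦X⟧) (a : ℕ) :
    coeff a (shiftAdd f) = C (a ! : ℝ)⁻¹ * (derivative ℝ)^[a] f := by
  ext b
  rw [coeff_coeff_shiftAdd, coeff_C_mul, coeff_iterate_derivative,
    Nat.ascFactorial_eq_factorial_mul_choose, add_comm b a]
  push_cast
  field_simp

theorem coeff_increment (f : ℝ⟦X⟧) {l : ℕ} (hl : l ≠ 0) :
    coeff l (increment f) = C (l ! : ℝ)⁻¹ * (derivative ℝ)^[l] f := by
  rw [increment, map_sub, coeff_shiftAdd, coeff_C, if_neg hl, sub_zero]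

theorem coeff_increment_pow (f : ℝ⟦X⟧) (k j : ℕ) :
    coeff j (increment f ^ k) =
      ∑ l ∈ posTuples k j, C (∏ i, ((l i)! : ℝ)⁻¹) * ∏ i, (derivative ℝ)^[l i] f := by
  rw [← Fin.prod_const, coeff_prod_eq_sum_piAntidiag, posTuples,
    ← piAntidiag_univ_fin_eq_antidiagonalTuple, ← sum_filter_of_ne (p := fun l ↦ ∀ i, 0 < l i)]
  · refine sum_congr rfl fun l hl ↦ ?_
    rw [map_prod, ← prod_mul_distrib]
    exact prod_congr rfl fun i _ ↦ coeff_increment f ((mem_filter.1 hl).2 i).ne'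
  · intro l _ hl i
    refine Nat.pos_of_ne_zero fun h ↦ hl (prod_eq_zero (mem_univ i) ?_)
    rw [h, coeff_zero_eq_constantCoeff_apply, constantCoeff_increment]

noncomputable def egf (c : ℕ → ℝ) : ℝ⟦X⟧ := mk fun q ↦ c q / q !

@[simp] theorem coeff_egf (c : ℕ → ℝ) (q : ℕ) : coeff q (egf c) = c q / q ! := coeff_mk _ _

theorem coeff_iterate_derivative_egf (c : ℕ → ℝ) (l b : ℕ) :
    coeff b ((derivative ℝ)^[l] (egf c)) = c (l + b) / b ! := by
  rw [coeff_iterate_derivative, coeff_egf, ← Nat.factorial_mul_ascFactorial, add_comm b l]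
  push_cast
  field_simp

theorem shiftAdd_egf_pow (r : ℝ) :
    shiftAdd (egf (r ^ ·)) = map C (egf (r ^ ·)) * C (egf (r ^ ·)) := by
  ext a b
  rw [coeff_coeff_shiftAdd, coeff_mul_C, coeff_map, coeff_C_mul, coeff_egf, coeff_egf, coeff_egf,
    Nat.cast_choose ℝ (Nat.le_add_right a b), Nat.add_sub_cancel_left, pow_add]
  field_simp

theorem shiftAdd_egf_pow_mul_sub_one_pow (M : ℝ⟦X⟧) (r : ℝ) (K : ℕ) :
    shiftAdd (egf (r ^ ·) * (M - 1) ^ K) = ∑ a ∈ range (K + 1), K.choose a •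
      (C (egf (r ^ ·) * (M - 1) ^ a) * (map C (egf (r ^ ·)) * increment M ^ (K - a))) := by
  have hsplit : shiftAdd M - 1 = C (M - 1) + increment M := by
    rw [increment, map_sub, map_one]
    ring
  rw [map_mul, map_pow, map_sub, map_one, hsplit, add_pow, shiftAdd_egf_pow, mul_sum]
  refine sum_congr rfl fun a _ ↦ ?_
  rw [map_mul, map_pow, nsmul_eq_mul]
  ring

theorem coeff_add_egf_pow_mul_sub_one_pow (M : ℝ⟦X⟧) (r : ℝ) (m n K : ℕ) :
    (m + n)! * (K ! : ℝ)⁻¹ * coeff (m + n) (egf (r ^ ·) * (M - 1) ^ K) =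
      ∑ i ∈ range (n + 1), (n.choose i : ℝ) * ∑ p ∈ antidiagonal K,
        i ! * (p.1 ! : ℝ)⁻¹ * coeff i (egf (r ^ ·) * (M - 1) ^ p.1) *
          ((p.2 ! : ℝ)⁻¹ * (m ! * (n - i)! *
            coeff (n - i) (coeff m (map C (egf (r ^ ·)) * increment M ^ p.2)))) := by
  calc (m + n)! * (K ! : ℝ)⁻¹ * coeff (m + n) (egf (r ^ ·) * (M - 1) ^ K)
      = m ! * n ! * (K ! : ℝ)⁻¹ * coeff n (coeff m (shiftAdd (egf (r ^ ·) * (M - 1) ^ K))) := by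
        rw [coeff_coeff_shiftAdd, Nat.cast_choose ℝ (Nat.le_add_right m n),
          Nat.add_sub_cancel_left]
        field_simp
    _ = m ! * n ! * (K ! : ℝ)⁻¹ * ∑ a ∈ range (K + 1), (K.choose a : ℝ) *
          ∑ p ∈ antidiagonal n, coeff p.1 (egf (r ^ ·) * (M - 1) ^ a) *
            coeff p.2 (coeff m (map C (egf (r ^ ·)) * increment M ^ (K - a))) := by
        simp only [shiftAdd_egf_pow_mul_sub_one_pow, map_sum, map_nsmul]
        simp only [coeff_coeff_C_mul, nsmul_eq_mul]
    _ = _ := by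
        simp only [Nat.sum_antidiagonal_eq_sum_range_succ_mk, mul_sum]
        rw [sum_comm]
        refine sum_congr rfl fun a ha ↦ sum_congr rfl fun i hi ↦ ?_
        rw [Nat.cast_choose ℝ (Nat.lt_succ_iff.1 (mem_range.1 ha)),
          Nat.cast_choose ℝ (Nat.lt_succ_iff.1 (mem_range.1 hi))]
        field_simp

theorem sum_posTuples_eq_coeff_coeff (M : ℝ⟦X⟧) (r : ℝ) (k m q : ℕ) :
    ∑ j ∈ Icc k m, (m.choose j : ℝ) * ∑ l ∈ posTuples k j,
        (Nat.multinomial univ l : ℝ) * r ^ (m - j) *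
          (q ! * coeff q (∏ i, (derivative ℝ)^[l i] M)) =
      m ! * q ! * coeff q (coeff m (map C (egf (r ^ ·)) * increment M ^ k)) := by
  rw [coeff_mul, ← Nat.sum_antidiagonal_swap, Nat.sum_antidiagonal_eq_sum_range_succ_mk,
    map_sum, mul_sum]
  rw [sum_subset (fun j hj ↦ mem_range.2 (Nat.lt_succ_of_le (mem_Icc.1 hj).2)) fun j hj hjk ↦ by
    rw [posTuples_eq_empty (by simp_all), sum_empty, mul_zero]]
  refine sum_congr rfl fun j hj ↦ ?_
  simp only [Prod.swap, coeff_map, coeff_egf, coeff_C_mul, coeff_increment_pow, map_sum, mul_sum]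
  refine sum_congr rfl fun l hl ↦ ?_
  rw [posTuples, mem_filter, Nat.mem_antidiagonalTuple] at hl
  rw [Nat.cast_multinomial, hl.1, Nat.cast_choose ℝ (Nat.lt_succ_iff.1 (mem_range.1 hj)),
    prod_inv_distrib]
  field_simp

end PowerSeries

theorem ProbabilityTheory.iIndepFun.integrable_fun_prod_comp {Ω ι : Type*}
    {mΩ : MeasurableSpace Ω} {P : Measure Ω} [Fintype ι] {X : ι → Ω → ℝ} {f : ι → ℝ → ℝ}
    (hX : iIndepFun X P) (mX : ∀ i, AEMeasurable (X i) P)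
    (hf : ∀ i, Integrable (f i) (P.map (X i))) :
    Integrable (fun ω ↦ ∏ i, f i (X i ω)) P := by
  have := hX.isProbabilityMeasure
  have h := Integrable.fintype_prod hf
  rw [← hX.map_fun_eq_pi_map mX] at h
  exact h.comp_aemeasurable (aemeasurable_pi_lambda _ mX)

theorem constantCoeff_egf_moment {Ω : Type*} {mΩ : MeasurableSpace Ω} {P : Measure Ω}
    [IsProbabilityMeasure P] (Y₀ : Ω → ℝ) : constantCoeff (egf (moment Y₀ · P)) = 1 := by
  simp [← coeff_zero_eq_constantCoeff_apply, moment]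

section IID

variable {Ω : Type*} {mΩ : MeasurableSpace Ω} {P : Measure Ω} {Y : ℕ → Ω → ℝ} {Y₀ : Ω → ℝ}

theorem integral_prod_pow (hIndep : iIndepFun Y P) (hId : ∀ i, IdentDistrib (Y i) Y₀ P P)
    {k : ℕ} (e : Fin k → ℕ) :
    ∫ ω, ∏ i : Fin k, Y i ω ^ e i ∂P = ∏ i, moment Y₀ (e i) P := by
  rw [(hIndep.precomp Fin.val_injective).integral_fun_prod_comp
    (fun i ↦ (hId i).aemeasurable_fst) (fun i ↦ (continuous_pow (e i)).aestronglyMeasurable)]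
  exact prod_congr rfl fun i _ ↦ ((hId i).comp (measurable_id.pow_const (e i))).integral_eq

theorem integrable_prod_pow (hIndep : iIndepFun Y P) (hId : ∀ i, IdentDistrib (Y i) Y₀ P P)
    (hInt : ∀ m : ℕ, Integrable (fun ω ↦ Y₀ ω ^ m) P) {k : ℕ} (e : Fin k → ℕ) :
    Integrable (fun ω ↦ ∏ i : Fin k, Y i ω ^ e i) P := by
  refine (hIndep.precomp Fin.val_injective).integrable_fun_prod_comp (f := fun i x ↦ x ^ e i)
    (fun i ↦ (hId i).aemeasurable_fst) fun i ↦ ?_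
  rw [(hId i).map_eq, integrable_map_measure (continuous_pow (e i)).aestronglyMeasurable
    (hId i).aemeasurable_snd]
  exact hInt (e i)

theorem integrable_S_pow_mul_prod_pow (hIndep : iIndepFun Y P)
    (hId : ∀ i, IdentDistrib (Y i) Y₀ P P) (hInt : ∀ m : ℕ, Integrable (fun ω ↦ Y₀ ω ^ m) P)
    (k q : ℕ) (c : Fin k → ℕ) :
    Integrable (fun ω ↦ S Y k ω ^ q * ∏ i : Fin k, Y i ω ^ c i) P := by
  simp_rw [S, sum_range_pow_mul_prod_pow]
  exact integrable_finsetSum _ fun t _ ↦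
    (integrable_prod_pow hIndep hId hInt fun i ↦ t i + c i).const_mul _

theorem integral_S_pow_mul_prod_pow (hIndep : iIndepFun Y P)
    (hId : ∀ i, IdentDistrib (Y i) Y₀ P P) (hInt : ∀ m : ℕ, Integrable (fun ω ↦ Y₀ ω ^ m) P)
    (k q : ℕ) (c : Fin k → ℕ) :
    ∫ ω, S Y k ω ^ q * ∏ i : Fin k, Y i ω ^ c i ∂P =
      q ! * coeff q (∏ i : Fin k, (derivative ℝ)^[c i] (egf (moment Y₀ · P))) := by
  simp_rw [S, sum_range_pow_mul_prod_pow]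
  rw [integral_finsetSum _ fun t _ ↦
    (integrable_prod_pow hIndep hId hInt fun i ↦ t i + c i).const_mul _,
    coeff_prod_eq_sum_piAntidiag, mul_sum]
  refine sum_congr rfl fun t ht ↦ ?_
  rw [integral_const_mul, integral_prod_pow hIndep hId, Nat.cast_multinomial,
    (mem_piAntidiag.1 ht).1]
  simp only [coeff_iterate_derivative_egf, div_eq_mul_inv, prod_mul_distrib, prod_inv_distrib,
    add_comm (c _)]
  ring

theorem integral_S_add_pow (hIndep : iIndepFun Y P) (hId : ∀ i, IdentDistrib (Y i) Y₀ P P)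
    (hInt : ∀ m : ℕ, Integrable (fun ω ↦ Y₀ ω ^ m) P) (p N : ℕ) (r : ℝ) :
    ∫ ω, (S Y p ω + r) ^ N ∂P = N ! * coeff N (egf (r ^ ·) * egf (moment Y₀ · P) ^ p) := by
  have hS (j : ℕ) := integral_S_pow_mul_prod_pow hIndep hId hInt p j 0
  have hSint (j : ℕ) := integrable_S_pow_mul_prod_pow hIndep hId hInt p j 0
  simp only [Pi.zero_apply, pow_zero, prod_const_one, mul_one, Function.iterate_zero, id_eq,
    Fin.prod_const] at hS hSint
  simp_rw [add_pow]
  rw [integral_finsetSum _ fun j _ ↦ ((hSint j).mul_const _).mul_const _, coeff_mul,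
    ← Nat.sum_antidiagonal_swap, Nat.sum_antidiagonal_eq_sum_range_succ_mk, mul_sum]
  refine sum_congr rfl fun j hj ↦ ?_
  rw [integral_mul_const, integral_mul_const, hS,
    Nat.cast_choose ℝ (Nat.lt_succ_iff.1 (mem_range.1 hj))]
  simp only [Prod.swap, coeff_egf]
  field_simp

end IID

theorem probRStirling_eq_coeff {Y : ℕ → Ω → ℝ} {Y₀ : Ω → ℝ} (hIndep : iIndepFun Y)
    (hId : ∀ i, IdentDistrib (Y i) Y₀) (hInt : ∀ m : ℕ, Integrable fun ω ↦ Y₀ ω ^ m) (r N K : ℕ) :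
    probRStirling Y r N K =
      N ! * (K ! : ℝ)⁻¹ * coeff N (egf ((r : ℝ) ^ ·) * (egf (moment Y₀ · ℙ) - 1) ^ K) := by
  rw [probRStirling, sub_eq_add_neg, add_pow, mul_sum _ _ (egf _), map_sum, mul_sum, mul_sum]
  refine sum_congr rfl fun j _ ↦ ?_
  have hterm : egf ((r : ℝ) ^ ·) *
      (egf (moment Y₀ · ℙ) ^ j * (-1) ^ (K - j) * (K.choose j : ℝ⟦X⟧)) =
      C ((-1) ^ (K - j) * (K.choose j : ℝ)) * (egf ((r : ℝ) ^ ·) * egf (moment Y₀ · ℙ) ^ j) := by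
    simp only [map_mul, map_pow, map_neg, map_one, map_natCast]
    ring
  rw [hterm, coeff_C_mul, integral_S_add_pow hIndep hId hInt]
  ring

theorem probRBell_recurrence_general
    [IsProbabilityMeasure (volume : Measure Ω)]
    (Y : ℕ → Ω → ℝ) (Y₀ : Ω → ℝ)
    (hIndep : iIndepFun Y volume)
    (hId : ∀ i, IdentDistrib (Y i) Y₀ volume volume)
    (hInt : ∀ m : ℕ, Integrable fun ω => (Y₀ ω) ^ m)
    (r : ℕ)
    (m n : ℕ) (x : ℝ) :
    phiRBell Y r (m + n) x =
      ∑ i ∈ Finset.range (n + 1), ∑ k ∈ Finset.range (m + 1),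
        (n.choose i : ℝ) * phiRBell Y r i x * x ^ k * ((k.factorial : ℝ))⁻¹ *
          ∑ j ∈ Finset.Icc k m, (m.choose j : ℝ) *
            ∑ l ∈ posTuples k j,
              (Nat.multinomial Finset.univ l : ℝ) * (r : ℝ) ^ (m - j) *
                ∫ ω, (S Y k ω) ^ (n - i) * ∏ i' : Fin k, (Y i' ω) ^ (l i') := by
  set M := egf (moment Y₀ · ℙ)
  have hM : constantCoeff (M - 1) = 0 := by
    rw [map_sub, constantCoeff_egf_moment, map_one, sub_self]
  have hs := probRStirling_eq_coeff hIndep hId hInt r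
  have key := sum_range_mul_pow_eq_of_binomial_convolution (s := probRStirling Y r)
    (w := fun k q ↦ (k ! : ℝ)⁻¹ * ∑ j ∈ Icc k m, (m.choose j : ℝ) * ∑ l ∈ posTuples k j,
      (Nat.multinomial univ l : ℝ) * (r : ℝ) ^ (m - j) *
        ∫ ω, S Y k ω ^ q * ∏ i' : Fin k, Y i' ω ^ l i')
    (fun N K h ↦ by rw [hs, coeff_mul_pow_eq_zero_of_lt hM _ h, mul_zero])
    (fun k q h ↦ by rw [Icc_eq_empty_of_lt h, sum_empty, mul_zero])
    (fun K ↦ by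
      simp only [hs, integral_S_pow_mul_prod_pow hIndep hId hInt, sum_posTuples_eq_coeff_coeff]
      exact coeff_add_egf_pow_mul_sub_one_pow M r m n K) x
  simp only [phiRBell, key, mul_assoc]

theorem probRBell_recurrence
    [IsProbabilityMeasure (volume : Measure Ω)]
    (Y : ℕ → Ω → ℝ) (Y₀ : Ω → ℝ)
    (hMeas : ∀ i, Measurable (Y i))
    (hIndep : iIndepFun Y volume)
    (hId : ∀ i, IdentDistrib (Y i) Y₀ volume volume)
    (hInt : ∀ m : ℕ, Integrable fun ω => (Y₀ ω) ^ m)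
    (r : ℕ) (hr : 0 < r)
    (m n : ℕ) (x : ℝ) :
    phiRBell Y r (m + n) x =
      ∑ i ∈ Finset.range (n + 1), ∑ k ∈ Finset.range (m + 1),
        (n.choose i : ℝ) * phiRBell Y r i x * x ^ k * ((k.factorial : ℝ))⁻¹ *
          ∑ j ∈ Finset.Icc k m, (m.choose j : ℝ) *
            ∑ l ∈ posTuples k j,
              (Nat.multinomial Finset.univ l : ℝ) * (r : ℝ) ^ (m - j) *
                ∫ ω, (S Y k ω) ^ (n - i) * ∏ i' : Fin k, (Y i' ω) ^ (l i') :=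
  probRBell_recurrence_general Y Y₀ hIndep hId hInt r m n x

end
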